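/- arXiv:2209.05875 — 3 statements merged into one kernel-verified Lean document; each statement's English description precedes it below -/
import Mathlib

section
/- Let n be a natural number and let X, Y, Z be n×n complex matrices. Then ‖XZ − ZY‖₂² + ‖X*Z‖₂² + ‖ZY*‖₂² = ‖XZ‖₂² + ‖ZY‖₂² + ‖X*Z − ZY*‖₂². -/
open Matrix
open scoped ComplexOrder

/-- Hilbert–Schmidt (Frobenius) norm: ‖X‖₂ = √(Re Tr(XᴴX)). -/
noncomputable def hsNorm {n : ℕ} (X : Matrix (Fin n) (Fin n) ℂ) : ℝ :=
  Real.sqrt ((Matrix.trace (Xᴴ * X)).re)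

/-- Angle Θ(X,Y) = arccos(Re Tr(YᴴX) / (‖X‖₂‖Y‖₂)). -/
noncomputable def theta {n : ℕ} (X Y : Matrix (Fin n) (Fin n) ℂ) : ℝ :=
  Real.arccos ((Matrix.trace (Yᴴ * X)).re / (hsNorm X * hsNorm Y))

/-- |X| : the positive semidefinite square root of XᴴX. -/
noncomputable def matAbs {n : ℕ} (X : Matrix (Fin n) (Fin n) ℂ) : Matrix (Fin n) (Fin n) ℂ :=
  (Matrix.posSemidef_conjTranspose_mul_self X).1.eigenvectorUnitary.1 *
    diagonal ((↑) ∘ (√·) ∘ (Matrix.posSemidef_conjTranspose_mul_self X).1.eigenvalues) *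
    (star (Matrix.posSemidef_conjTranspose_mul_self X).1.eigenvectorUnitary : Matrix (Fin n) (Fin n) ℂ)

/-!
Expanding both differences by `‖A - B‖₂² = ‖A‖₂² + ‖B‖₂² - 2 Re Tr(AᴴB)` reduces the identity to
`Re Tr((XZ)ᴴ ZY) = Re Tr((XᴴZ)ᴴ ZYᴴ)`, and by cyclicity of the trace these two traces are
complex conjugates of each other.
-/

namespace Matrix

variable {ι 𝕜 : Type*} [Fintype ι] [RCLike 𝕜]

lemma re_trace_conjTranspose_mul_self_nonneg (A : Matrix ι ι 𝕜) :
    0 ≤ RCLike.re (Aᴴ * A).trace :=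
  (RCLike.nonneg_iff.mp (posSemidef_conjTranspose_mul_self A).trace_nonneg).1

lemma re_trace_conjTranspose_mul_comm (A B : Matrix ι ι 𝕜) :
    RCLike.re (Aᴴ * B).trace = RCLike.re (Bᴴ * A).trace := by
  rw [← conjTranspose_conjTranspose (Bᴴ * A), trace_conjTranspose, conjTranspose_mul,
    conjTranspose_conjTranspose, RCLike.star_def, RCLike.conj_re]

lemma re_trace_conjTranspose_sub_mul_sub (A B : Matrix ι ι 𝕜) :
    RCLike.re ((A - B)ᴴ * (A - B)).trace =
      RCLike.re (Aᴴ * A).trace + RCLike.re (Bᴴ * B).trace - 2 * RCLike.re (Aᴴ * B).trace := by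
  simp only [conjTranspose_sub, sub_mul, mul_sub, trace_sub, map_sub,
    re_trace_conjTranspose_mul_comm B A]
  ring

lemma re_trace_conjTranspose_mul_mul_swap_conjTranspose (X Y Z : Matrix ι ι 𝕜) :
    RCLike.re ((X * Z)ᴴ * (Z * Y)).trace = RCLike.re ((Xᴴ * Z)ᴴ * (Z * Yᴴ)).trace := by
  have h : (Xᴴ * Z)ᴴ * (Z * Yᴴ) = (Y * (Zᴴ * Xᴴ * Z))ᴴ := by
    simp only [conjTranspose_mul, conjTranspose_conjTranspose, Matrix.mul_assoc]
  rw [h, trace_conjTranspose, RCLike.star_def, RCLike.conj_re, trace_mul_comm Y]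
  simp only [conjTranspose_mul, Matrix.mul_assoc]

end Matrix

lemma hsNorm_sq {n : ℕ} (A : Matrix (Fin n) (Fin n) ℂ) :
    hsNorm A ^ 2 = (Aᴴ * A).trace.re :=
  Real.sq_sqrt (re_trace_conjTranspose_mul_self_nonneg A)

lemma hsNorm_sub_sq {n : ℕ} (A B : Matrix (Fin n) (Fin n) ℂ) :
    hsNorm (A - B) ^ 2 = hsNorm A ^ 2 + hsNorm B ^ 2 - 2 * (Aᴴ * B).trace.re := by
  simp only [hsNorm_sq]
  exact re_trace_conjTranspose_sub_mul_sub A B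

theorem stmt_3 {n : ℕ} (X Y Z : Matrix (Fin n) (Fin n) ℂ) :
    hsNorm (X * Z - Z * Y) ^ 2 + hsNorm (Xᴴ * Z) ^ 2 + hsNorm (Z * Yᴴ) ^ 2 =
      hsNorm (X * Z) ^ 2 + hsNorm (Z * Y) ^ 2 + hsNorm (Xᴴ * Z - Z * Yᴴ) ^ 2 := by
  have cross := re_trace_conjTranspose_mul_mul_swap_conjTranspose X Y Z
  simp only [RCLike.re_to_complex] at cross
  rw [hsNorm_sub_sq, hsNorm_sub_sq]
  linear_combination -2 * cross
end

section
/- Let n be a natural number and let X, Y be n×n complex matrices. Then |Tr(Y*X)|² ≤ Re Tr(|Y*||X*|) · Re Tr(|Y||X|). -/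
open Matrix
open scoped ComplexOrder

/-!
Factor `X = K T` with `T = |X|^{1/2}` and `K = X |X|^{-1/2}` (pseudo-inverse), so that
`T*T = |X|` and `K K* = |X*|`; factor `Y = L S` likewise. Then
`Tr(Y*X) = Tr((S T*)* (L* K))`, and Cauchy–Schwarz for the Hilbert–Schmidt inner product gives
`|Tr(Y*X)|² ≤ Tr(T S* S T*) Tr(K* L L* K) = Tr(|Y||X|) Tr(|Y*||X*|)`.
-/

namespace Matrix

open scoped MatrixOrder

variable {n 𝕜 : Type*} [Fintype n] [DecidableEq n] [RCLike 𝕜]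

lemma norm_trace_conjTranspose_mul_sq_le (A B : Matrix n n 𝕜) :
    ‖(Aᴴ * B).trace‖ ^ 2 ≤ RCLike.re (Aᴴ * A).trace * RCLike.re (Bᴴ * B).trace := by
  let := toMatrixSeminormedAddCommGroup (1 : Matrix n n 𝕜) PosSemidef.one
  let := toMatrixInnerProductSpace (1 : Matrix n n 𝕜) PosSemidef.one
  have inner_eq (C D : Matrix n n 𝕜) : inner 𝕜 C D = (Cᴴ * D).trace := by
    change (D * 1 * Cᴴ).trace = _
    rw [mul_one, trace_mul_comm]
  have swap : (Bᴴ * A).trace = star (Aᴴ * B).trace := by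
    rw [← trace_conjTranspose, conjTranspose_mul, conjTranspose_conjTranspose]
  have h := inner_mul_inner_self_le (𝕜 := 𝕜) A B
  rwa [inner_eq, inner_eq, inner_eq, inner_eq, swap, norm_star, ← sq] at h

lemma norm_trace_conjTranspose_mul_sq_le_of_eq_mul {X Y K T L S : Matrix n n 𝕜}
    (hX : X = K * T) (hY : Y = L * S) :
    ‖(Yᴴ * X).trace‖ ^ 2 ≤
      RCLike.re (L * Lᴴ * (K * Kᴴ)).trace * RCLike.re (Sᴴ * S * (Tᴴ * T)).trace := by
  have hYX : (Yᴴ * X).trace = ((S * Tᴴ)ᴴ * (Lᴴ * K)).trace := by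
    simp only [hX, hY, conjTranspose_mul, conjTranspose_conjTranspose, mul_assoc]
    rw [trace_mul_comm T]
    simp only [mul_assoc]
  have hST : ((S * Tᴴ)ᴴ * (S * Tᴴ)).trace = (Sᴴ * S * (Tᴴ * T)).trace := by
    simp only [conjTranspose_mul, conjTranspose_conjTranspose, mul_assoc]
    rw [trace_mul_comm T]
    simp only [mul_assoc]
  have hLK : ((Lᴴ * K)ᴴ * (Lᴴ * K)).trace = (L * Lᴴ * (K * Kᴴ)).trace := by
    simp only [conjTranspose_mul, conjTranspose_conjTranspose, mul_assoc]
    rw [trace_mul_comm Kᴴ]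
    simp only [mul_assoc]
  rw [hYX, ← hST, ← hLK, mul_comm]
  exact norm_trace_conjTranspose_mul_sq_le _ _

lemma continuousOn_spectrum_real (A : Matrix n n 𝕜) (f : ℝ → ℝ) :
    ContinuousOn f (spectrum ℝ A) :=
  A.finite_real_spectrum.continuousOn f

lemma mul_cfc_conjTranspose_mul_self_eq_self (X : Matrix n n 𝕜) {f : ℝ → ℝ}
    (hf : ∀ t ∈ spectrum ℝ (Xᴴ * X), f t * t = t) : X * cfc f (Xᴴ * X) = X := by
  set H := Xᴴ * X
  set c := cfc f H
  have hH : IsSelfAdjoint H := (posSemidef_conjTranspose_mul_self X).isHermitian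
  have hcH : c * H = H :=
    calc c * H = cfc (fun t => f t * t) H := by
          rw [cfc_mul _ _ _ (continuousOn_spectrum_real _ _) (continuousOn_spectrum_real _ _),
            cfc_id' ℝ H]
      _ = cfc (fun t => t) H := cfc_congr hf
      _ = H := cfc_id' ℝ H
  have hHc : H * c = H := by
    have hcomm := cfc_commute_cfc (fun t => t) f H
    rw [cfc_id' ℝ H] at hcomm
    rw [hcomm.eq, hcH]
  have hc : cᴴ = c := (cfc_predicate f H).star_eq
  have : (X - X * c)ᴴ * (X - X * c) = 0 := by
    rw [conjTranspose_sub, conjTranspose_mul, hc]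
    calc _ = H - c * H - H * c + c * H * c := by simp only [H]; noncomm_ring
      _ = 0 := by rw [hcH, hHc]; abel
  exact sub_eq_zero.mp (conjTranspose_mul_self_eq_zero.mp this) |>.symm

lemma exists_eq_mul_abs_factors (X : Matrix n n 𝕜) :
    ∃ K T : Matrix n n 𝕜, X = K * T ∧ K * Kᴴ = CFC.abs Xᴴ ∧ Tᴴ * T = CFC.abs X := by
  set H := Xᴴ * X
  have hH : 0 ≤ H := (posSemidef_conjTranspose_mul_self X).nonneg
  have hspec : ∀ t ∈ spectrum ℝ H, 0 ≤ t := fun t ht => spectrum_nonneg_of_nonneg hH ht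
  have hcont := continuousOn_spectrum_real H
  set r : ℝ → ℝ := fun t => √√t
  have hr4 : ∀ t, 0 ≤ t → r t * r t * (r t * r t) = t := fun t ht => by
    simp only [r, Real.mul_self_sqrt (Real.sqrt_nonneg t), Real.mul_self_sqrt ht]
  -- Since `0⁻¹ = 0`, `c` is the pseudo-inverse `|X|^{-1/2}`, vanishing on the kernel of `X`.
  set c := cfc (fun t => (r t)⁻¹) H
  set T := cfc r H
  have hT : Tᴴ = T := (cfc_predicate r H).star_eq
  have hc : cᴴ = c := (cfc_predicate (fun t => (r t)⁻¹) H).star_eq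
  refine ⟨X * c, T, ?_, ?_, ?_⟩
  · rw [mul_assoc, ← cfc_mul _ _ _ (hcont _) (hcont _),
      mul_cfc_conjTranspose_mul_self_eq_self]
    intro t ht
    rcases (hspec t ht).eq_or_lt with rfl | ht'
    · simp
    · have : r t ≠ 0 := by positivity
      rw [inv_mul_cancel₀ this, one_mul]
  · have hXX : star Xᴴ * Xᴴ = X * Xᴴ := by
      rw [star_eq_conjTranspose, conjTranspose_conjTranspose]
    rw [CFC.abs, hXX]
    refine (CFC.sqrt_unique ?_ (posSemidef_self_mul_conjTranspose _).nonneg).symm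
    calc X * c * (X * c)ᴴ * (X * c * (X * c)ᴴ)
        = X * cfc (fun t => (r t)⁻¹ * (r t)⁻¹ * t * ((r t)⁻¹ * (r t)⁻¹)) H * Xᴴ := by
          rw [cfc_mul _ _ _ (hcont _) (hcont _), cfc_mul _ _ _ (hcont _) (hcont _),
            cfc_mul _ _ _ (hcont _) (hcont _), cfc_id' ℝ H, conjTranspose_mul, hc]
          simp only [c, H, mul_assoc]
      _ = X * Xᴴ := by
          rw [mul_cfc_conjTranspose_mul_self_eq_self]
          intro t ht
          rcases (hspec t ht).eq_or_lt with rfl | ht'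
          · simp
          · have hr : r t ≠ 0 := by positivity
            field_simp
            linear_combination -hr4 t ht'.le
  · rw [hT]
    change T * T = CFC.sqrt H
    rw [← cfc_mul _ _ _ (hcont _) (hcont _), CFC.sqrt_eq_real_sqrt _ hH, cfcₙ_eq_cfc]
    exact cfc_congr fun t _ => Real.mul_self_sqrt (Real.sqrt_nonneg t)

theorem norm_trace_conjTranspose_mul_sq_le_abs (X Y : Matrix n n 𝕜) :
    ‖(Yᴴ * X).trace‖ ^ 2 ≤
      RCLike.re (CFC.abs Yᴴ * CFC.abs Xᴴ).trace * RCLike.re (CFC.abs Y * CFC.abs X).trace := by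
  obtain ⟨K, T, hX, hK, hT⟩ := exists_eq_mul_abs_factors X
  obtain ⟨L, S, hY, hL, hS⟩ := exists_eq_mul_abs_factors Y
  simpa only [hK, hT, hL, hS] using norm_trace_conjTranspose_mul_sq_le_of_eq_mul hX hY

end Matrix

open scoped MatrixOrder in
lemma matAbs_eq_abs {n : ℕ} (X : Matrix (Fin n) (Fin n) ℂ) : matAbs X = CFC.abs X := by
  have hH := posSemidef_conjTranspose_mul_self X
  change _ = CFC.sqrt (Xᴴ * X)
  rw [CFC.sqrt_eq_real_sqrt _ hH.nonneg, cfcₙ_eq_cfc, hH.isHermitian.cfc_eq, IsHermitian.cfc,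
    Unitary.conjStarAlgAut_apply]
  rfl

theorem stmt_7 {n : ℕ} (X Y : Matrix (Fin n) (Fin n) ℂ) :
    ‖Matrix.trace (Yᴴ * X)‖ ^ 2 ≤
      (Matrix.trace (matAbs Yᴴ * matAbs Xᴴ)).re * (Matrix.trace (matAbs Y * matAbs X)).re := by
  simpa only [matAbs_eq_abs, RCLike.re_to_complex] using norm_trace_conjTranspose_mul_sq_le_abs X Y
end

section
/- Let n be a natural number and let X, Y be n×n complex matrices. Then ‖|X| − |Y|‖₂² ≤ ‖X + Y‖₂ · ‖X − Y‖₂. -/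
open Matrix
open scoped ComplexOrder

/-!
Write `C = |X| - |Y|`, `D = |X| + |Y|`, `S = X + Y`, `T = X - Y`. Since `|X|² = X*X` and
`|Y|² = Y*Y`, the anticommutator `CD + DC` equals `S*T + T*S`, and `-D ≤ C ≤ D` in the Loewner
order. For a unit eigenvector `v` of `C` with eigenvalue `μ` the first fact gives
`μ ⟪v, Dv⟫ = Re ⟪Sv, Tv⟫` and the second `|μ| ≤ ⟪v, Dv⟫`, so `μ² ≤ ‖Sv‖ ‖Tv‖`. Summing over an
orthonormal eigenbasis of `C` and applying Cauchy–Schwarz gives `‖C‖₂² ≤ ‖S‖₂ ‖T‖₂`.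
-/

open scoped InnerProductSpace

namespace LinearMap

variable {𝕜 E : Type*} [RCLike 𝕜] [NormedAddCommGroup E] [InnerProductSpace 𝕜 E]
  {C D S T : E →ₗ[𝕜] E} {v : E} {μ : ℝ}

open RCLike

lemma isSymmetric_of_neg_le_of_le (h₁ : -D ≤ C) (h₂ : C ≤ D) : C.IsSymmetric := by
  intro x y
  have e₁ := h₁.isSymmetric x y
  have e₂ := h₂.isSymmetric x y
  simp only [sub_apply, sub_neg_eq_add, add_apply, inner_add_left, inner_add_right,
    inner_sub_left, inner_sub_right] at e₁ e₂
  linear_combination (e₁ - e₂) / 2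

lemma abs_le_re_inner_of_neg_le_of_le (h₁ : -D ≤ C) (h₂ : C ≤ D) (hv : C v = (μ : 𝕜) • v)
    (hv₁ : ‖v‖ = 1) : |μ| ≤ re ⟪v, D v⟫_𝕜 := by
  have hμ : re ⟪v, C v⟫_𝕜 = μ := by simp [hv, inner_smul_right, hv₁]
  have hle := h₂.re_inner_nonneg_right v
  have hge := h₁.re_inner_nonneg_right v
  simp only [sub_apply, sub_neg_eq_add, add_apply, inner_add_right, inner_sub_right,
    map_add, map_sub] at hle hge
  exact abs_le.2 ⟨by linarith, by linarith⟩

variable [FiniteDimensional 𝕜 E]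

lemma mul_re_inner_eq_re_inner (hC : C.IsSymmetric) (hv : C v = (μ : 𝕜) • v)
    (hCD : C * D + D * C = star S * T + star T * S) :
    μ * re ⟪v, D v⟫_𝕜 = re ⟪S v, T v⟫_𝕜 := by
  have h := congrArg (fun L : E →ₗ[𝕜] E => re ⟪v, L v⟫_𝕜) hCD
  simp only [add_apply, Module.End.mul_apply, star_eq_adjoint, inner_add_right,
    adjoint_inner_right, ← hC v _, hv, map_smul, inner_smul_left, inner_smul_right, map_add,
    conj_ofReal, re_ofReal_mul] at h
  rw [inner_re_symm (𝕜 := 𝕜) (T v)] at h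
  linarith

lemma sq_le_norm_mul_norm_of_neg_le_of_le (h₁ : -D ≤ C) (h₂ : C ≤ D) (hv : C v = (μ : 𝕜) • v)
    (hv₁ : ‖v‖ = 1) (hCD : C * D + D * C = star S * T + star T * S) :
    μ ^ 2 ≤ ‖S v‖ * ‖T v‖ := by
  have hμ := abs_le_re_inner_of_neg_le_of_le h₁ h₂ hv hv₁
  calc μ ^ 2 = |μ| * |μ| := by rw [← sq_abs, sq]
    _ ≤ |μ| * re ⟪v, D v⟫_𝕜 := by gcongr
    _ = |re ⟪S v, T v⟫_𝕜| := by
      rw [← mul_re_inner_eq_re_inner (isSymmetric_of_neg_le_of_le h₁ h₂) hv hCD, abs_mul,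
        abs_of_nonneg ((abs_nonneg μ).trans hμ)]
    _ ≤ ‖S v‖ * ‖T v‖ := (abs_re_le_norm _).trans (norm_inner_le_norm _ _)

lemma re_trace_star_mul_self {ι : Type*} [Fintype ι] (S : E →ₗ[𝕜] E)
    (b : OrthonormalBasis ι 𝕜 E) :
    re (trace 𝕜 E (star S * S)) = ∑ i, ‖S (b i)‖ ^ 2 := by
  simp [trace_eq_sum_inner _ b, star_eq_adjoint, adjoint_inner_right]

theorem re_trace_star_mul_self_le (h₁ : -D ≤ C) (h₂ : C ≤ D)
    (hCD : C * D + D * C = star S * T + star T * S) :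
    re (trace 𝕜 E (star C * C)) ≤
      √(re (trace 𝕜 E (star S * S))) * √(re (trace 𝕜 E (star T * T))) := by
  have hC := isSymmetric_of_neg_le_of_le h₁ h₂
  set b := hC.eigenvectorBasis rfl
  have hb (i) : ‖C (b i)‖ ^ 2 = hC.eigenvalues rfl i ^ 2 := by
    simp [b, norm_smul, b.orthonormal.1 i]
  rw [re_trace_star_mul_self C b, re_trace_star_mul_self S b, re_trace_star_mul_self T b]
  calc ∑ i, ‖C (b i)‖ ^ 2 ≤ ∑ i, ‖S (b i)‖ * ‖T (b i)‖ := by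
        refine Finset.sum_le_sum fun i _ => ?_
        rw [hb]
        exact sq_le_norm_mul_norm_of_neg_le_of_le h₁ h₂ (hC.apply_eigenvectorBasis rfl i)
          (b.orthonormal.1 i) hCD
    _ ≤ _ := Real.sum_mul_le_sqrt_mul_sqrt _ _ _

end LinearMap

lemma sub_mul_add_add_add_mul_sub_eq {R : Type*} [Ring R] [StarRing R] {a b x y : R}
    (ha : a * a = star x * x) (hb : b * b = star y * y) :
    (a - b) * (a + b) + (a + b) * (a - b) = star (x + y) * (x - y) + star (x - y) * (x + y) := by
  have lhs : (a - b) * (a + b) + (a + b) * (a - b) = 2 * (a * a - b * b) := by noncomm_ring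
  have rhs : star (x + y) * (x - y) + star (x - y) * (x + y) = 2 * (star x * x - star y * y) := by
    rw [star_add, star_sub]; noncomm_ring
  rw [lhs, rhs, ha, hb]

lemma Matrix.toEuclideanLin_conjTranspose_mul {𝕜 n : Type*} [RCLike 𝕜] [Fintype n] [DecidableEq n]
    (M N : Matrix n n 𝕜) :
    toEuclideanLin (Mᴴ * N) = star (toEuclideanLin M) * toEuclideanLin N := by
  rw [toLpLin_mul_same, toEuclideanLin_conjTranspose_eq_adjoint, LinearMap.star_eq_adjoint]
  rfl

lemma hsNorm_eq_sqrt_re_trace {n : ℕ} (M : Matrix (Fin n) (Fin n) ℂ) :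
    hsNorm M = √(RCLike.re (LinearMap.trace ℂ _ (star (toEuclideanLin M) * toEuclideanLin M))) := by
  rw [hsNorm, ← toEuclideanLin_conjTranspose_mul, toEuclideanLin_eq_toLin_orthonormal,
    trace_toLin_eq, RCLike.re_to_complex]

lemma sq_hsNorm {n : ℕ} (M : Matrix (Fin n) (Fin n) ℂ) :
    hsNorm M ^ 2 = RCLike.re (LinearMap.trace ℂ _ (star (toEuclideanLin M) * toEuclideanLin M)) := by
  refine (hsNorm_eq_sqrt_re_trace M ▸ Real.sq_sqrt ?_)
  rw [LinearMap.re_trace_star_mul_self _ (EuclideanSpace.basisFun _ ℂ)]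
  positivity

lemma matAbs_posSemidef {n : ℕ} (X : Matrix (Fin n) (Fin n) ℂ) : (matAbs X).PosSemidef := by
  rw [matAbs, star_eq_conjTranspose]
  refine (PosSemidef.diagonal fun i => ?_).mul_mul_conjTranspose_same _
  simp [Complex.zero_le_real, Real.sqrt_nonneg]

lemma matAbs_mul_self {n : ℕ} (X : Matrix (Fin n) (Fin n) ℂ) :
    matAbs X * matAbs X = Xᴴ * X := by
  set hH := (posSemidef_conjTranspose_mul_self X).1
  set U : Matrix (Fin n) (Fin n) ℂ := hH.eigenvectorUnitary.1
  have hU : star U * U = 1 := Unitary.coe_star_mul_self _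
  have hsq : diagonal ((↑) ∘ (√·) ∘ hH.eigenvalues) * diagonal ((↑) ∘ (√·) ∘ hH.eigenvalues)
      = (diagonal (RCLike.ofReal ∘ hH.eigenvalues) : Matrix (Fin n) (Fin n) ℂ) := by
    rw [diagonal_mul_diagonal]
    congr 1
    funext i
    simp [← Complex.ofReal_mul,
      Real.mul_self_sqrt ((posSemidef_conjTranspose_mul_self X).eigenvalues_nonneg i)]
  conv_rhs => rw [hH.spectral_theorem, Unitary.conjStarAlgAut_apply]
  calc matAbs X * matAbs X
      = U * (diagonal ((↑) ∘ (√·) ∘ hH.eigenvalues) * (star U * U) *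
          diagonal ((↑) ∘ (√·) ∘ hH.eigenvalues)) * star U := by
        simp only [matAbs, U, mul_assoc]
    _ = _ := by rw [hU, mul_one, hsq]

lemma toEuclideanLin_mul_self_matAbs {n : ℕ} (X : Matrix (Fin n) (Fin n) ℂ) :
    toEuclideanLin (matAbs X) * toEuclideanLin (matAbs X) =
      star (toEuclideanLin X) * toEuclideanLin X := by
  rw [← toEuclideanLin_conjTranspose_mul, ← matAbs_mul_self]
  exact (toLpLin_mul_same _ _ _).symm

theorem stmt_17 {n : ℕ} (X Y : Matrix (Fin n) (Fin n) ℂ) :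
    hsNorm (matAbs X - matAbs Y) ^ 2 ≤ hsNorm (X + Y) * hsNorm (X - Y) := by
  set A := toEuclideanLin (matAbs X)
  set B := toEuclideanLin (matAbs Y)
  have hA : 0 ≤ A := (LinearMap.nonneg_iff_isPositive A).2
    (isPositive_toEuclideanLin_iff.2 (matAbs_posSemidef X))
  have hB : 0 ≤ B := (LinearMap.nonneg_iff_isPositive B).2
    (isPositive_toEuclideanLin_iff.2 (matAbs_posSemidef Y))
  have hAB : A - B ≤ A + B := by
    rw [sub_eq_add_neg]; exact add_le_add_right (neg_le_self hB) A
  have hBA : -(A + B) ≤ A - B := by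
    rw [neg_add, sub_eq_add_neg]; exact add_le_add_left (neg_le_self hA) _
  have key := sub_mul_add_add_add_mul_sub_eq
    (toEuclideanLin_mul_self_matAbs X) (toEuclideanLin_mul_self_matAbs Y)
  rw [sq_hsNorm, hsNorm_eq_sqrt_re_trace, hsNorm_eq_sqrt_re_trace, map_sub, map_add, map_sub]
  exact LinearMap.re_trace_star_mul_self_le hBA hAB key
end
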